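/- Let n ≥ 4 be an even integer and q a nonzero complex number. At every critical point p of W_0 the following relations hold: z_2(p)^{n+1} = 4q·z_2(p); 2q·z_1(p)·z_2(p) = z_2(p)^{n/2+1}; and q·z_1(p)^2 = 1 if n ≡ 2 (mod 4), while 2q^2·z_1(p)^2 = −2q + z_2(p)^n if n ≡ 0 (mod 4). -/

import Mathlib

open Finset

/-- One-based access to the coordinates of a point `z ∈ ℂⁿ`: `zc n z j = z_j` for
`1 ≤ j ≤ n` (and `0` for out-of-range indices, which are never used). -/
noncomputable def zc (n : ℕ) (z : Fin n → ℂ) (j : ℕ) : ℂ :=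
  if h : 1 ≤ j ∧ j ≤ n then z ⟨j - 1, by omega⟩ else 0

/-- The mirror Landau–Ginzburg potential of the quadric `Qⁿ`:
`W₀(z) = q z₁² z_n/(z₁⋯z_n − 1) + z₂ + ∑_{i=2}^{n−1} z_i z_{i+1}`,
defined on `Zⁿ = {z ∈ ℂⁿ : z₁⋯z_n ≠ 1}`. -/
noncomputable def W0 (n : ℕ) (q : ℂ) (z : Fin n → ℂ) : ℂ :=
  q * (zc n z 1) ^ 2 * zc n z n / ((∏ j, z j) - 1)
    + zc n z 2 + ∑ i ∈ Finset.Icc 2 (n - 1), zc n z i * zc n z (i + 1)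

/-- `z` is a critical point of `W₀` in `Zⁿ`: `z₁⋯z_n ≠ 1` and all `n` partial derivatives
`∂W₀/∂z_j` vanish at `z`. -/
def IsCritPt (n : ℕ) (q : ℂ) (z : Fin n → ℂ) : Prop :=
  (∏ j, z j) ≠ 1 ∧
    ∀ j : Fin n, deriv (fun t => W0 n q (Function.update z j t)) (z j) = 0

/-- Membership in `V(I₁)`: `z_{2i+1} = 1` for `1 ≤ i ≤ n/2−1`, `z_{2i} = z_n` for
`1 ≤ i ≤ n/2`, `q z₁² = 1`, and `z₁ z_n^{n/2} = 2`. -/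
def MemV1 (n : ℕ) (q : ℂ) (z : Fin n → ℂ) : Prop :=
  (∀ i : ℕ, 1 ≤ i → i ≤ n / 2 - 1 → zc n z (2 * i + 1) = 1) ∧
    (∀ i : ℕ, 1 ≤ i → i ≤ n / 2 → zc n z (2 * i) = zc n z n) ∧
    q * (zc n z 1) ^ 2 = 1 ∧ zc n z 1 * (zc n z n) ^ (n / 2) = 2

/-- Membership in `V(I₂)`: `z_{2i+1} = (−1)^i` for `1 ≤ i ≤ n/2−1`, `z_{2i} = 0` for
`1 ≤ i ≤ n/2`, and `q z₁² = (−1)^{(n−2)/2}`. -/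
def MemV2 (n : ℕ) (q : ℂ) (z : Fin n → ℂ) : Prop :=
  (∀ i : ℕ, 1 ≤ i → i ≤ n / 2 - 1 → zc n z (2 * i + 1) = (-1 : ℂ) ^ i) ∧
    (∀ i : ℕ, 1 ≤ i → i ≤ n / 2 → zc n z (2 * i) = 0) ∧
    q * (zc n z 1) ^ 2 = (-1 : ℂ) ^ ((n - 2) / 2)


/-!
Write `A = q z₁² zₙ` and `P = z₁⋯zₙ`. Cleared of its denominator, `∂W₀/∂z_k = 0` reads
`A · P/z_k = (z_{k-1} + z_{k+1}) (P - 1)²` along the chain, with corrections at `k = 1, 2, n`.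

If `A = 0`, these say `z_{k+2} = -z_k`, so the odd coordinates alternate starting from
`z₃ = -1` and the even ones starting from `z₂`. The equation at `k = n` then rules out `z₁ = 0`,
so `zₙ = 0`, whence `z₂ = 0` and `q z₁² = (-1)^{n/2-1}`.

If `A ≠ 0`, the equation at `k = 1` gives `P = 2`; then `z_k z_{k+1} - A` alternates in sign and
vanishes at `k = n - 1`, so all neighbour products equal `z₂ = A`. The coordinates are therefore
2-periodic, `q z₁² = 1` and `z₁ z₂^{n/2} = P = 2`. The relations follow by algebra in both cases.
-/

lemma zc_succ (n : ℕ) (z : Fin n → ℂ) (j : Fin n) : zc n z (j + 1) = z j := by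
  simp [zc, j.isLt]

lemma zc_update (n : ℕ) (z : Fin n → ℂ) (j : Fin n) (t : ℂ) (i : ℕ) :
    zc n (Function.update z j t) i = if i = j + 1 then t else zc n z i := by
  unfold zc
  split_ifs with hi hij hij <;> try rfl
  · rw [Function.update_apply, if_pos (Fin.ext (by simp only; omega))]
  · refine (Function.update_apply _ _ _ _).trans (if_neg fun h => hij ?_)
    have := congrArg Fin.val h
    simp only at this
    omega
  · exact absurd ⟨by omega, by omega⟩ hi

/-- `∂(z₁⋯zₙ)/∂z_k`, with one-based `k`. -/
noncomputable def cofactor (n : ℕ) (z : Fin n → ℂ) (k : ℕ) : ℂ :=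
  ∏ i ∈ univ.filter (fun i : Fin n => (i : ℕ) + 1 ≠ k), z i

lemma cofactor_succ (n : ℕ) (z : Fin n → ℂ) (j : Fin n) :
    cofactor n z (j + 1) = ∏ i ∈ univ.erase j, z i := by
  simp [cofactor, Fin.val_inj, filter_ne']

lemma zc_mul_cofactor (n : ℕ) (z : Fin n → ℂ) {k : ℕ} (hk₀ : 1 ≤ k) (hk : k ≤ n) :
    zc n z k * cofactor n z k = ∏ i, z i := by
  obtain ⟨j, rfl⟩ : ∃ j : Fin n, k = j + 1 := ⟨⟨k - 1, by omega⟩, by simp only; omega⟩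
  rw [zc_succ, cofactor_succ, mul_prod_erase _ _ (mem_univ j)]

lemma prod_update_eq_mul_cofactor (n : ℕ) (z : Fin n → ℂ) (j : Fin n) (t : ℂ) :
    ∏ i, Function.update z j t i = t * cofactor n z (j + 1) := by
  rw [prod_update_of_mem (mem_univ j), cofactor_succ, ← erase_eq]

lemma hasDerivAt_zc_update (n : ℕ) (z : Fin n → ℂ) (j : Fin n) (i : ℕ) (t : ℂ) :
    HasDerivAt (fun s => zc n (Function.update z j s) i) (if i = j + 1 then 1 else 0) t := by
  simp only [zc_update]
  split_ifs
  · exact hasDerivAt_id t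
  · exact hasDerivAt_const t _

lemma hasDerivAt_W0_update (n : ℕ) (q : ℂ) (z : Fin n → ℂ) (hP : ∏ i, z i ≠ 1)
    (j : Fin n) {k : ℕ} (hk : j + 1 = k) :
    HasDerivAt (fun t => W0 n q (Function.update z j t))
      ((q * (2 * zc n z 1 * zc n z n * (if 1 = k then 1 else 0)
            + zc n z 1 ^ 2 * (if n = k then 1 else 0)) * ((∏ i, z i) - 1)
          - q * zc n z 1 ^ 2 * zc n z n * cofactor n z k) / ((∏ i, z i) - 1) ^ 2
        + (if 2 = k then 1 else 0)
        + ∑ i ∈ Icc 2 (n - 1), ((if i = k then 1 else 0) * zc n z (i + 1)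
            + zc n z i * (if i + 1 = k then 1 else 0))) (z j) := by
  subst hk
  have hx (i : ℕ) := hasDerivAt_zc_update n z j i (z j)
  have hden : HasDerivAt (fun t => t * cofactor n z (j + 1) - 1) (cofactor n z (j + 1)) (z j) := by
    simpa using ((hasDerivAt_id (z j)).mul_const (cofactor n z (j + 1))).sub_const 1
  have hD : z j * cofactor n z (j + 1) - 1 ≠ 0 := by
    rw [← prod_update_eq_mul_cofactor, Function.update_eq_self]
    exact sub_ne_zero.mpr hP
  simp only [W0, prod_update_eq_mul_cofactor]
  refine (((((hx 1).fun_pow 2).const_mul q).fun_mul (hx n)).fun_div hden hD |>.fun_add (hx 2)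
    |>.fun_add (HasDerivAt.fun_sum fun i _ => (hx i).fun_mul (hx (i + 1)))).congr_deriv ?_
  simp only [Function.update_eq_self, ← prod_update_eq_mul_cofactor]
  push_cast
  ring

lemma sum_Icc_ite_mul_add_mul_ite {R : Type*} [Semiring R] (a : ℕ → R) (l m : ℕ) {k : ℕ}
    (hk : 1 ≤ k) :
    ∑ i ∈ Icc l m, ((if i = k then 1 else 0) * a (i + 1) + a i * (if i + 1 = k then 1 else 0))
      = (if k ∈ Icc l m then a (k + 1) else 0) + (if k - 1 ∈ Icc l m then a (k - 1) else 0) := by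
  have hk' (i : ℕ) : i + 1 = k ↔ i = k - 1 := by omega
  simp only [ite_mul, one_mul, zero_mul, mul_ite, mul_one, mul_zero, hk', sum_add_distrib,
    sum_ite_eq']

lemma eq_pow_mul_of_step {M : Type*} [Monoid M] (w : ℕ → M) (a : M) {m s N : ℕ}
    (h : ∀ k, m ≤ k → k + s ≤ N → w (k + s) = a * w k) :
    ∀ i, m + s * i ≤ N → w (m + s * i) = a ^ i * w m
  | 0, _ => by simp
  | i + 1, hi => by
    rw [show m + s * (i + 1) = m + s * i + s by ring, h _ (by omega) (by linarith),
      eq_pow_mul_of_step w a h i (by nlinarith), pow_succ', mul_assoc]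

lemma prod_range_two_mul_eq_pow {M : Type*} [CommMonoid M] (f : ℕ → M) (c : M) :
    ∀ m, (∀ i < m, f (2 * i) * f (2 * i + 1) = c) → ∏ k ∈ range (2 * m), f k = c ^ m
  | 0, _ => by simp
  | m + 1, h => by
    rw [show 2 * (m + 1) = 2 * m + 1 + 1 by ring, prod_range_succ, prod_range_succ,
      prod_range_two_mul_eq_pow f c m (fun i hi => h i (by omega)), mul_assoc, h m (by omega),
      pow_succ]

lemma prod_eq_prod_range_zc (n : ℕ) (z : Fin n → ℂ) :
    ∏ i, z i = ∏ k ∈ range n, zc n z (k + 1) := by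
  rw [← Fin.prod_univ_eq_prod_range]
  simp only [zc_succ]

namespace IsCritPt

variable {n : ℕ} {q : ℂ} {z : Fin n → ℂ}

/-- `∂W₀/∂z_k = 0`, multiplied by `(z₁⋯zₙ - 1)²`. -/
lemma partial_eq_zero (hz : IsCritPt n q z) {k : ℕ} (hk₀ : 1 ≤ k) (hk : k ≤ n) :
    q * (2 * zc n z 1 * zc n z n * (if 1 = k then 1 else 0)
        + zc n z 1 ^ 2 * (if n = k then 1 else 0)) * ((∏ i, z i) - 1)
      - q * zc n z 1 ^ 2 * zc n z n * cofactor n z k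
      + ((if 2 = k then 1 else 0) + (if k ∈ Icc 2 (n - 1) then zc n z (k + 1) else 0)
        + (if k - 1 ∈ Icc 2 (n - 1) then zc n z (k - 1) else 0)) * ((∏ i, z i) - 1) ^ 2 = 0 := by
  have hD : (∏ i, z i) - 1 ≠ 0 := sub_ne_zero.mpr hz.1
  have h := (hasDerivAt_W0_update n q z hz.1 ⟨k - 1, by omega⟩ (k := k) (by simp only; omega)).deriv
  rw [hz.2, sum_Icc_ite_mul_add_mul_ite _ _ _ hk₀] at h
  field_simp at h
  linear_combination -h

lemma partial_one (hz : IsCritPt n q z) (hn : 2 ≤ n) :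
    2 * q * zc n z 1 * zc n z n * ((∏ i, z i) - 1)
      = q * zc n z 1 ^ 2 * zc n z n * cofactor n z 1 := by
  have h := hz.partial_eq_zero le_rfl (by omega)
  simp only [show n ≠ 1 by omega, mem_Icc, Nat.reduceSub, Nat.reduceEqDiff, Nat.reduceLeDiff,
    false_and, ↓reduceIte] at h
  linear_combination h

lemma partial_two (hz : IsCritPt n q z) (hn : 3 ≤ n) :
    q * zc n z 1 ^ 2 * zc n z n * cofactor n z 2 = (1 + zc n z 3) * ((∏ i, z i) - 1) ^ 2 := by
  have h := hz.partial_eq_zero (k := 2) (by omega) (by omega)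
  simp only [show n ≠ 2 by omega, show 2 ≤ n - 1 by omega, mem_Icc, Nat.reduceSub,
    Nat.reduceEqDiff, Nat.reduceLeDiff, false_and, and_self, le_refl, ↓reduceIte] at h
  linear_combination -h

lemma partial_mid (hz : IsCritPt n q z) {k : ℕ} (hk₀ : 3 ≤ k) (hk : k ≤ n - 1) :
    q * zc n z 1 ^ 2 * zc n z n * cofactor n z k
      = (zc n z (k + 1) + zc n z (k - 1)) * ((∏ i, z i) - 1) ^ 2 := by
  have h := hz.partial_eq_zero (k := k) (by omega) (by omega)
  simp only [show 1 ≠ k by omega, show n ≠ k by omega, show 2 ≠ k by omega, show 2 ≤ k by omega,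
    hk, show 2 ≤ k - 1 by omega, show k - 1 ≤ n - 1 by omega, mem_Icc, and_self, ↓reduceIte] at h
  linear_combination -h

lemma partial_last (hz : IsCritPt n q z) (hn : 3 ≤ n) :
    q * zc n z 1 ^ 2 * ((∏ i, z i) - 1) + zc n z (n - 1) * ((∏ i, z i) - 1) ^ 2
      = q * zc n z 1 ^ 2 * zc n z n * cofactor n z n := by
  have h := hz.partial_eq_zero (k := n) (by omega) le_rfl
  simp only [show 1 ≠ n by omega, show 2 ≠ n by omega, show 2 ≤ n - 1 by omega,
    show ¬n ≤ n - 1 by omega, mem_Icc, and_false, and_self, le_refl, ↓reduceIte] at h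
  linear_combination h

lemma zc_add_two_eq_neg_of_eq_zero (hz : IsCritPt n q z) (hA : q * zc n z 1 ^ 2 * zc n z n = 0)
    {k : ℕ} (hk₀ : 2 ≤ k) (hk : k + 2 ≤ n) : zc n z (k + 2) = -1 * zc n z k := by
  have hD : ((∏ i, z i) - 1) ^ 2 ≠ 0 := pow_ne_zero 2 (sub_ne_zero.mpr hz.1)
  have h := hz.partial_mid (k := k + 1) (by omega) (by omega)
  rw [hA, zero_mul, eq_comm, mul_eq_zero_iff_right hD, Nat.add_sub_cancel] at h
  linear_combination h

lemma relations_of_eq_zero (hz : IsCritPt n q z) (hn : 4 ≤ n) (hev : Even n) (hq : q ≠ 0)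
    (hA : q * zc n z 1 ^ 2 * zc n z n = 0) :
    zc n z 2 = 0 ∧ q * zc n z 1 ^ 2 = (-1) ^ (n / 2 - 1) := by
  obtain ⟨m, hm⟩ := hev
  have hD : (∏ i, z i) - 1 ≠ 0 := sub_ne_zero.mpr hz.1
  have hstep {m₀ : ℕ} (h₀ : 2 ≤ m₀) := eq_pow_mul_of_step (zc n z) (-1) (m := m₀) (N := n)
    (s := 2) fun k hk₀ hk => hz.zc_add_two_eq_neg_of_eq_zero hA (h₀.trans hk₀) hk
  have h3 : zc n z 3 = -1 := by
    have h := hz.partial_two (by omega)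
    rw [hA, zero_mul, eq_comm, mul_eq_zero_iff_right (pow_ne_zero 2 hD)] at h
    linear_combination h
  have hodd : zc n z (n - 1) = (-1) ^ (m - 1) := by
    have h := hstep (m₀ := 3) (by omega) (m - 2) (by omega)
    rwa [show 3 + 2 * (m - 2) = n - 1 by omega, h3, ← pow_succ,
      show m - 2 + 1 = m - 1 by omega] at h
  have heven : zc n z n = (-1) ^ (m - 1) * zc n z 2 := by
    have h := hstep le_rfl (m - 1) (by omega)
    rwa [show 2 + 2 * (m - 1) = n by omega] at h
  have hlast := hz.partial_last (by omega)
  rw [hA, zero_mul, hodd] at hlast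
  have hz1 : zc n z 1 ≠ 0 := by
    rintro h1
    rw [h1] at hlast
    simp [hD] at hlast
  have hzn : zc n z n = 0 := by simpa [hq, hz1] using hA
  have hP : ∏ i, z i = 0 := by
    rw [← zc_mul_cofactor n z (k := n) (by omega) le_rfl, hzn, zero_mul]
  rw [show n / 2 = m by omega]
  refine ⟨?_, ?_⟩
  · simpa [hzn] using heven
  · rw [hP] at hlast
    linear_combination -hlast

lemma prod_eq_two (hz : IsCritPt n q z) (hn : 2 ≤ n) (hA : q * zc n z 1 ^ 2 * zc n z n ≠ 0) :
    ∏ i, z i = 2 := by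
  have h := hz.partial_one hn
  have hC := zc_mul_cofactor n z (k := 1) le_rfl (by omega)
  have h' : q * zc n z 1 ^ 2 * zc n z n * ((∏ i, z i) - 2) = 0 := by
    linear_combination zc n z 1 * h + q * zc n z 1 ^ 2 * zc n z n * hC
  linear_combination (mul_eq_zero_iff_left hA).mp h'

lemma zc_mul_zc_succ_of_ne_zero (hz : IsCritPt n q z) (hn : 4 ≤ n) (hev : Even n)
    (hA : q * zc n z 1 ^ 2 * zc n z n ≠ 0) :
    zc n z 2 = q * zc n z 1 ^ 2 * zc n z n ∧
      ∀ k, 2 ≤ k → k ≤ n - 1 → zc n z k * zc n z (k + 1) = zc n z 2 := by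
  set A := q * zc n z 1 ^ 2 * zc n z n
  have hD : (∏ i, z i) - 1 = 1 := by rw [hz.prod_eq_two (by omega) hA]; norm_num
  have hC {k : ℕ} (hk₀ : 1 ≤ k) (hk : k ≤ n) : zc n z k * cofactor n z k = 2 := by
    rw [zc_mul_cofactor n z hk₀ hk, hz.prod_eq_two (by omega) hA]
  set u : ℕ → ℂ := fun k => zc n z k * zc n z (k + 1) - A
  have hu2 : u 2 = A - zc n z 2 := by
    have h := hz.partial_two (by omega)
    rw [hD] at h
    linear_combination -zc n z 2 * h + A * hC (k := 2) (by omega) (by omega)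
  have hstep : ∀ k, 2 ≤ k → k + 1 ≤ n - 1 → u (k + 1) = -1 * u k := by
    intro k hk₀ hk
    have h := hz.partial_mid (k := k + 1) (by omega) hk
    rw [hD, Nat.add_sub_cancel] at h
    linear_combination -zc n z (k + 1) * h + A * hC (k := k + 1) (by omega) (by omega)
  have hlast : u (n - 1) = 0 := by
    have h := hz.partial_last (by omega)
    rw [hD] at h
    show zc n z (n - 1) * zc n z (n - 1 + 1) - A = 0
    rw [Nat.sub_add_cancel (by omega)]
    linear_combination zc n z n * h + A * hC (k := n) (by omega) le_rfl
  have hu (i : ℕ) (hi : 2 + 1 * i ≤ n - 1) := eq_pow_mul_of_step u (-1) hstep i hi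
  have hA2 : zc n z 2 = A := by
    have h := hu (n - 3) (by omega)
    rw [show 2 + 1 * (n - 3) = n - 1 by omega, hlast, hu2,
      Odd.neg_one_pow (by obtain ⟨m, hm⟩ := hev; exact ⟨m - 2, by omega⟩)] at h
    linear_combination -h
  refine ⟨hA2, fun k hk₀ hk => ?_⟩
  have h := hu (k - 2) (by omega)
  rw [show 2 + 1 * (k - 2) = k by omega, hu2, hA2, sub_self, mul_zero] at h
  linear_combination h - hA2

lemma relations_of_ne_zero (hz : IsCritPt n q z) (hn : 4 ≤ n) (hev : Even n)
    (hA : q * zc n z 1 ^ 2 * zc n z n ≠ 0) :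
    q * zc n z 1 ^ 2 = 1 ∧ zc n z 1 * zc n z 2 ^ (n / 2) = 2 := by
  obtain ⟨m, hm⟩ := hev
  obtain ⟨hA2, hpair⟩ := hz.zc_mul_zc_succ_of_ne_zero hn ⟨m, hm⟩ hA
  have hx2 : zc n z 2 ≠ 0 := hA2 ▸ hA
  have hperiod : ∀ k, 2 ≤ k → k + 2 ≤ n → zc n z (k + 2) = 1 * zc n z k := by
    intro k hk₀ hk
    have h₁ := hpair k hk₀ (by omega)
    have h₂ := hpair (k + 1) (by omega) (by omega)
    have hne : zc n z (k + 1) ≠ 0 := right_ne_zero_of_mul (h₁ ▸ hx2)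
    refine mul_left_cancel₀ hne ?_
    linear_combination h₂ - h₁
  have hzn : zc n z n = zc n z 2 := by
    have h := eq_pow_mul_of_step (zc n z) 1 hperiod (m - 1) (by omega)
    rwa [show 2 + 2 * (m - 1) = n by omega, one_pow, one_mul] at h
  have hprod : ∏ i, z i = zc n z 1 * zc n z 2 ^ m := by
    have hpow := prod_range_two_mul_eq_pow (fun k => zc n z (k + 3)) (zc n z 2) (m - 1)
      fun i hi => hpair (2 * i + 3) (by omega) (by omega)
    rw [prod_eq_prod_range_zc, show range n = range (2 * (m - 1) + 1 + 1) by congr 1; omega,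
      prod_range_succ', prod_range_succ', hpow, ← pow_succ, mul_comm, Nat.sub_add_cancel (by omega)]
  refine ⟨mul_right_cancel₀ hx2 ?_, ?_⟩
  · linear_combination -q * zc n z 1 ^ 2 * hzn - hA2
  · rw [show n / 2 = m by omega, ← hprod, hz.prod_eq_two (by omega) hA]

end IsCritPt

/-- **Relations of the Milnor ring at the critical points.**
For even `n ≥ 4`, `q ≠ 0`, and every critical point `p` of `W₀`:
`z₂(p)^{n+1} = 4q·z₂(p)`, `2q·z₁(p)·z₂(p) = z₂(p)^{n/2+1}`, and `q·z₁(p)² = 1` if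
`n ≡ 2 (mod 4)`, while `2q²·z₁(p)² = −2q + z₂(p)ⁿ` if `n ≡ 0 (mod 4)`. -/
theorem quadric_mirror_milnor_relations (n : ℕ) (hn : 4 ≤ n) (hev : Even n)
    (q : ℂ) (hq : q ≠ 0) (z : Fin n → ℂ) (hz : IsCritPt n q z) :
    (zc n z 2) ^ (n + 1) = 4 * q * zc n z 2 ∧
    2 * q * zc n z 1 * zc n z 2 = (zc n z 2) ^ (n / 2 + 1) ∧
    (n % 4 = 2 → q * (zc n z 1) ^ 2 = 1) ∧
    (n % 4 = 0 → 2 * q ^ 2 * (zc n z 1) ^ 2 = -2 * q + (zc n z 2) ^ n) := by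
  by_cases hA : q * zc n z 1 ^ 2 * zc n z n = 0
  · obtain ⟨h2, h1⟩ := hz.relations_of_eq_zero hn hev hq hA
    refine ⟨by simp [h2], by simp [h2], fun h4 => ?_, fun h4 => ?_⟩
    · rw [h1, Even.neg_one_pow ⟨n / 4, by omega⟩]
    · rw [Odd.neg_one_pow ⟨n / 4 - 1, by omega⟩] at h1
      rw [h2, zero_pow (by omega)]
      linear_combination 2 * q * h1
  · obtain ⟨h1, h2⟩ := hz.relations_of_ne_zero hn hev hA
    have hpow : zc n z 2 ^ n = 4 * q := by
      have hsq : (zc n z 1 * zc n z 2 ^ (n / 2)) ^ 2 = 4 := by rw [h2]; norm_num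
      rw [mul_pow, ← pow_mul, Nat.div_mul_cancel (even_iff_two_dvd.mp hev)] at hsq
      linear_combination q * hsq - zc n z 2 ^ n * h1
    refine ⟨by rw [pow_succ, hpow], ?_, fun _ => h1, fun _ => ?_⟩
    · linear_combination -q * zc n z 1 * zc n z 2 * h2 + zc n z 2 ^ (n / 2 + 1) * h1
    · linear_combination 2 * q * h1 - hpow
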